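/- arXiv:1811.07734 — 5 statements merged into one kernel-verified Lean document; each statement's English description precedes it below -/
import Mathlib

section
/- Let S be a nonempty compact subset of E = EuclideanSpace ℝ (Fin d). Then for every set A ⊆ E, A ⊆ 𝔤_S(A). -/
open Set Pointwise

noncomputable section

/-- The Voronoi cell of `c` with respect to the set `S`. -/
def vorCell {d : ℕ} (S : Set (EuclideanSpace ℝ (Fin d))) (c : EuclideanSpace ℝ (Fin d)) :
    Set (EuclideanSpace ℝ (Fin d)) :=
  {x | ∀ c' ∈ S, ‖x - c‖ ≤ ‖x - c'‖}

/-- `Q` is G-invariant with respect to `S`. -/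
def GInvariant {d : ℕ} (S Q : Set (EuclideanSpace ℝ (Fin d))) : Prop :=
  ∀ x ∈ convexHull ℝ S, ∀ e ∈ Q, ∀ c ∈ S, e + x ∈ vorCell S c → e + x - c ∈ Q

/-- `Q` is G-invariant with respect to the collection `𝕊`. -/
def GInvariantColl {d : ℕ} (𝕊 : Set (Set (EuclideanSpace ℝ (Fin d))))
    (Q : Set (EuclideanSpace ℝ (Fin d))) : Prop :=
  ∀ S ∈ 𝕊, GInvariant S Q

/-- The set operator 𝔤_S. -/
def gOp {d : ℕ} (S A : Set (EuclideanSpace ℝ (Fin d))) : Set (EuclideanSpace ℝ (Fin d)) :=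
  ⋃ c ∈ S, (fun v => v - c) '' ((convexHull ℝ S + A) ∩ vorCell S c)

/-- The set operator 𝔤_𝕊. -/
def gOpColl {d : ℕ} (𝕊 : Set (Set (EuclideanSpace ℝ (Fin d))))
    (A : Set (EuclideanSpace ℝ (Fin d))) : Set (EuclideanSpace ℝ (Fin d)) :=
  ⋃ S ∈ 𝕊, gOp S A

/-- Iterates of 𝔤_𝕊. -/
def gIter {d : ℕ} (𝕊 : Set (Set (EuclideanSpace ℝ (Fin d))))
    (A : Set (EuclideanSpace ℝ (Fin d))) : ℕ → Set (EuclideanSpace ℝ (Fin d))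
  | 0 => A
  | n + 1 => gOpColl 𝕊 (gIter 𝕊 A n)

/-- Iterates of 𝔤_S for a single set S. -/
def gIterS {d : ℕ} (S A : Set (EuclideanSpace ℝ (Fin d))) :
    ℕ → Set (EuclideanSpace ℝ (Fin d))
  | 0 => A
  | n + 1 => gOp S (gIterS S A n)

/-- `D` is F-invariant with respect to `S`. -/
def FInvariant {d : ℕ} (S D : Set (EuclideanSpace ℝ (Fin d))) : Prop :=
  ∀ z ∈ D, ∀ c ∈ S, z ∈ vorCell S c → ∀ x ∈ convexHull ℝ S, z + x - c ∈ D

/-- `D` is F-invariant with respect to the collection `𝕊`. -/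
def FInvariantColl {d : ℕ} (𝕊 : Set (Set (EuclideanSpace ℝ (Fin d))))
    (D : Set (EuclideanSpace ℝ (Fin d))) : Prop :=
  ∀ S ∈ 𝕊, FInvariant S D

/-- The set operator 𝔭_S. -/
def pOp {d : ℕ} (S D : Set (EuclideanSpace ℝ (Fin d))) : Set (EuclideanSpace ℝ (Fin d)) :=
  convexHull ℝ S + ⋃ c ∈ S, (fun v => v - c) '' (D ∩ vorCell S c)

/-- The set operator 𝔭_𝕊. -/
def pOpColl {d : ℕ} (𝕊 : Set (Set (EuclideanSpace ℝ (Fin d))))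
    (D : Set (EuclideanSpace ℝ (Fin d))) : Set (EuclideanSpace ℝ (Fin d)) :=
  ⋃ S ∈ 𝕊, pOp S D

/-- Iterates of 𝔭_𝕊. -/
def pIter {d : ℕ} (𝕊 : Set (Set (EuclideanSpace ℝ (Fin d))))
    (D : Set (EuclideanSpace ℝ (Fin d))) : ℕ → Set (EuclideanSpace ℝ (Fin d))
  | 0 => D
  | n + 1 => pOpColl 𝕊 (pIter 𝕊 D n)

/-- The convexified set operator 𝔊_𝕊. -/
def GOpColl {d : ℕ} (𝕊 : Set (Set (EuclideanSpace ℝ (Fin d))))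
    (A : Set (EuclideanSpace ℝ (Fin d))) : Set (EuclideanSpace ℝ (Fin d)) :=
  ⋃ S ∈ 𝕊, convexHull ℝ (gOp S A)

/-- Iterates of the convexified operator 𝔊_𝕊. -/
def GIter {d : ℕ} (𝕊 : Set (Set (EuclideanSpace ℝ (Fin d))))
    (Q : Set (EuclideanSpace ℝ (Fin d))) : ℕ → Set (EuclideanSpace ℝ (Fin d))
  | 0 => convexHull ℝ Q
  | n + 1 => GOpColl 𝕊 (GIter 𝕊 Q n)

/-! For `a ∈ A`, compactness gives `c ∈ S` maximizing `⟪a, ·⟫` on `S`. Then `a + c` lies in the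
Voronoi cell of `c`, because `‖a + c - c'‖² = ‖a‖² + 2⟪a, c - c'⟫ + ‖c - c'‖² ≥ ‖a‖²`; so
`a = (a + c) - c` with `a + c ∈ conv S + A`. -/

open scoped RealInnerProductSpace

theorem norm_le_norm_add_of_inner_nonneg {E : Type*} [NormedAddCommGroup E]
    [InnerProductSpace ℝ E] {a v : E} (h : 0 ≤ ⟪a, v⟫) : ‖a‖ ≤ ‖a + v‖ := by
  have hsq : ‖a‖ ^ 2 ≤ ‖a + v‖ ^ 2 := by
    rw [norm_add_sq_real]
    nlinarith [sq_nonneg ‖v‖]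
  exact (pow_le_pow_iff_left₀ (norm_nonneg _) (norm_nonneg _) two_ne_zero).mp hsq

theorem add_mem_vorCell_of_isMaxOn_inner {d : ℕ} {S : Set (EuclideanSpace ℝ (Fin d))}
    {a c : EuclideanSpace ℝ (Fin d)} (hc : IsMaxOn (fun x => ⟪a, x⟫) S c) :
    a + c ∈ vorCell S c := by
  intro c' hc'
  have hinner : 0 ≤ ⟪a, c - c'⟫ := by
    rw [inner_sub_right, sub_nonneg]
    exact hc hc'
  simpa [add_sub_assoc] using norm_le_norm_add_of_inner_nonneg hinner

theorem stmt1 {d : ℕ} (S : Set (EuclideanSpace ℝ (Fin d)))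
    (hS : S.Nonempty) (hSc : IsCompact S) :
    ∀ A : Set (EuclideanSpace ℝ (Fin d)), A ⊆ gOp S A := by
  intro A a ha
  obtain ⟨c, hcS, hmax⟩ : ∃ c ∈ S, IsMaxOn (fun x => ⟪a, x⟫) S c :=
    hSc.exists_isMaxOn hS (continuous_const.inner continuous_id).continuousOn
  have hmem : a + c ∈ convexHull ℝ S + A := by
    simpa only [add_comm c a] using add_mem_add (subset_convexHull ℝ S hcS) ha
  exact mem_iUnion₂.mpr
    ⟨c, hcS, a + c, ⟨hmem, add_mem_vorCell_of_isMaxOn_inner hmax⟩, add_sub_cancel_right a c⟩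
end
end

section
/- Let 𝕊 be a collection of nonempty compact subsets of E = EuclideanSpace ℝ (Fin d). For S ∈ 𝕊, let cor(S) := S ∩ (frontier of the convex hull of S) (the corner points) and inn(S) := S \ (frontier of the convex hull of S) (the inner points), and assume cor(S) is nonempty. Let Q ⊆ E be a set such that for every S ∈ 𝕊: (a) 𝔤_{cor(S)}(Q) ⊆ Q, where 𝔤_{cor(S)} is the set operator formed with the convex hull and Voronoi cells of cor(S); and (b) for every c ∈ inn(S), (((convex hull of S) + Q) ∩ V_S(c)) − c ⊆ Q. Then Q is G-invariant with respect to 𝕊; consequently, if in addition 0 ∈ Q, then 𝔤^∞_𝕊({0}) ⊆ Q, so if Q is bounded then the minimal G-invariant set with respect to 𝕊 containing the origin is bounded. -/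
open Set Pointwise

noncomputable section

/-!
The extreme points of the compact convex set `conv S` lie in `S` and, since the space is
nontrivial once `conv S` has a frontier point, not in its interior; by Krein–Milman,
`conv S = conv (cor S)` as soon as `cor S` is nonempty. A G-step at a corner point `c` of `S` is
therefore a step of `𝔤_{cor S}` (the Voronoi cell of `c` only grows when competitors are
removed), and a G-step at an inner point is hypothesis (b). So `Q` is closed under every
`𝔤_S`, hence under `𝔤_𝕊`, and contains the orbit of `0` whenever it contains `0`.
-/

section ConvexHullCompact

variable {E : Type*} [AddCommGroup E] [Module ℝ E]

theorem convexHull_range_eq_image_stdSimplex {ι : Type*} [Fintype ι] (p : ι → E) :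
    convexHull ℝ (range p) = (fun w : ι → ℝ => ∑ i, w i • p i) '' stdSimplex ℝ ι := by
  classical
  let L : (ι → ℝ) →ₗ[ℝ] E := ∑ i, (LinearMap.proj i).smulRight (p i)
  have hL : ⇑L = fun w => ∑ i, w i • p i := by ext w; simp [L]
  have hp : p = L ∘ fun i j : ι => if i = j then (1 : ℝ) else 0 := by funext i; simp [L]
  rw [← hL, ← convexHull_basis_eq_stdSimplex, LinearMap.image_convexHull, ← range_comp, ← hp]

theorem convexHull_eq_image_stdSimplex_prod [FiniteDimensional ℝ E] (s : Set E) :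
    convexHull ℝ s =
      (fun q : (Fin (Module.finrank ℝ E + 1) → ℝ) × (Fin (Module.finrank ℝ E + 1) → E) =>
        ∑ i, q.1 i • q.2 i) '' (stdSimplex ℝ _ ×ˢ univ.pi fun _ => s) := by
  refine Subset.antisymm (fun x hx => ?_) ?_
  · rw [convexHull_eq_union] at hx
    simp only [mem_iUnion] at hx
    obtain ⟨t, hts, ht, hxt⟩ := hx
    have : Nonempty t := (convexHull_nonempty_iff.1 ⟨x, hxt⟩).to_subtype
    have hcard : Fintype.card t ≤ Fintype.card (Fin (Module.finrank ℝ E + 1)) := by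
      simpa using ht.card_le_finrank_succ.trans (Nat.succ_le_succ (Submodule.finrank_le _))
    obtain ⟨f⟩ := Function.Embedding.nonempty_of_card_le hcard
    set g : Fin (Module.finrank ℝ E + 1) → t := Function.invFun f
    have hrange : range (fun i => (g i : E)) = t := by
      rw [range_comp' Subtype.val g, (Function.invFun_surjective f.injective).range_eq,
        image_univ, Subtype.range_coe]
    rw [← hrange, convexHull_range_eq_image_stdSimplex] at hxt
    obtain ⟨w, hw, rfl⟩ := hxt
    exact ⟨(w, _), ⟨hw, fun i _ => hts (g i).2⟩, rfl⟩
  · rintro _ ⟨⟨w, p⟩, ⟨hw, hp⟩, rfl⟩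
    have hwp : ∑ i, w i • p i ∈ convexHull ℝ (range p) := by
      rw [convexHull_range_eq_image_stdSimplex]
      exact mem_image_of_mem _ hw
    exact convexHull_mono (range_subset_iff.2 fun i => hp i (mem_univ i)) hwp

theorem IsCompact.convexHull [TopologicalSpace E] [ContinuousAdd E] [ContinuousSMul ℝ E]
    [FiniteDimensional ℝ E] {s : Set E} (hs : IsCompact s) : IsCompact (convexHull ℝ s) := by
  rw [convexHull_eq_image_stdSimplex_prod]
  exact ((isCompact_stdSimplex ℝ _).prod (isCompact_univ_pi fun _ => hs)).image (by fun_prop)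

end ConvexHullCompact

section CornerPoints

variable {E : Type*} [NormedAddCommGroup E] [NormedSpace ℝ E] [FiniteDimensional ℝ E]

theorem extremePoints_convexHull_subset_inter_frontier {S : Set E} (hS : IsCompact S)
    (hfr : (frontier (convexHull ℝ S)).Nonempty) :
    (convexHull ℝ S).extremePoints ℝ ⊆ S ∩ frontier (convexHull ℝ S) := by
  have : Nontrivial E := by
    by_contra h
    rw [not_nontrivial_iff_subsingleton] at h
    obtain ⟨x, hx⟩ := hfr
    rcases (convexHull ℝ S).eq_empty_or_nonempty with h | h
    · simp [h] at hx
    · simp [h.eq_univ] at hx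
  intro x hx
  refine ⟨extremePoints_convexHull_subset hx, ?_⟩
  rw [hS.convexHull.isClosed.frontier_eq]
  exact ⟨hx.1, fun hint => (disjoint_interior_extremePoints _).ne_of_mem hint hx rfl⟩

theorem convexHull_inter_frontier_convexHull {S : Set E} (hS : IsCompact S)
    (hcor : (S ∩ frontier (convexHull ℝ S)).Nonempty) :
    convexHull ℝ (S ∩ frontier (convexHull ℝ S)) = convexHull ℝ S := by
  refine (convexHull_mono inter_subset_left).antisymm ?_
  calc convexHull ℝ S = closure (convexHull ℝ ((convexHull ℝ S).extremePoints ℝ)) :=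
        (closure_convexHull_extremePoints hS.convexHull (convex_convexHull ℝ S)).symm
    _ ⊆ closure (convexHull ℝ (S ∩ frontier (convexHull ℝ S))) :=
        closure_mono (convexHull_mono
          (extremePoints_convexHull_subset_inter_frontier hS (hcor.mono inter_subset_right)))
    _ = convexHull ℝ (S ∩ frontier (convexHull ℝ S)) :=
        (hS.inter_right isClosed_frontier).convexHull.isClosed.closure_eq

end CornerPoints

section GInvariance

variable {d : ℕ}

theorem vorCell_anti {S T : Set (EuclideanSpace ℝ (Fin d))} (hTS : T ⊆ S)
    (c : EuclideanSpace ℝ (Fin d)) : vorCell S c ⊆ vorCell T c :=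
  fun _ hx c' hc' => hx c' (hTS hc')

theorem gOp_subset_iff {S A B : Set (EuclideanSpace ℝ (Fin d))} :
    gOp S A ⊆ B ↔
      ∀ x ∈ convexHull ℝ S, ∀ e ∈ A, ∀ c ∈ S, e + x ∈ vorCell S c → e + x - c ∈ B := by
  simp only [gOp, iUnion_subset_iff, image_subset_iff]
  constructor
  · intro h x hx e he c hc hvor
    exact h c hc ⟨add_comm x e ▸ add_mem_add hx he, hvor⟩
  · rintro h c hc _ ⟨⟨x, hx, e, he, rfl⟩, hvor⟩
    simp only [mem_preimage, add_comm x e] at hvor ⊢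
    exact h x hx e he c hc hvor

theorem gInvariant_iff_gOp_subset {S Q : Set (EuclideanSpace ℝ (Fin d))} :
    GInvariant S Q ↔ gOp S Q ⊆ Q :=
  gOp_subset_iff.symm

theorem gOp_mono {S A B : Set (EuclideanSpace ℝ (Fin d))} (hAB : A ⊆ B) : gOp S A ⊆ gOp S B :=
  biUnion_mono subset_rfl fun _ _ =>
    image_mono (inter_subset_inter_left _ (add_subset_add_left hAB))

theorem GInvariantColl.gOpColl_subset {𝕊 : Set (Set (EuclideanSpace ℝ (Fin d)))}
    {Q A : Set (EuclideanSpace ℝ (Fin d))} (hQ : GInvariantColl 𝕊 Q) (hA : A ⊆ Q) :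
    gOpColl 𝕊 A ⊆ Q :=
  iUnion₂_subset fun S hS => (gOp_mono hA).trans (gInvariant_iff_gOp_subset.1 (hQ S hS))

theorem GInvariantColl.iUnion_gIter_subset {𝕊 : Set (Set (EuclideanSpace ℝ (Fin d)))}
    {Q A : Set (EuclideanSpace ℝ (Fin d))} (hQ : GInvariantColl 𝕊 Q) (hA : A ⊆ Q) :
    ⋃ n, gIter 𝕊 A n ⊆ Q := by
  refine iUnion_subset fun n => ?_
  induction n with
  | zero => exact hA
  | succ n ih => exact hQ.gOpColl_subset ih

theorem gInvariant_of_corner_of_inner {S Q : Set (EuclideanSpace ℝ (Fin d))} (hS : IsCompact S)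
    (hcor : GInvariant (S ∩ frontier (convexHull ℝ S)) Q)
    (hinn : ∀ c ∈ S \ frontier (convexHull ℝ S),
      (fun v => v - c) '' ((convexHull ℝ S + Q) ∩ vorCell S c) ⊆ Q) :
    GInvariant S Q := by
  intro x hx e he c hc hvor
  by_cases hcf : c ∈ frontier (convexHull ℝ S)
  · rw [← convexHull_inter_frontier_convexHull hS ⟨c, hc, hcf⟩] at hx
    exact hcor x hx e he c ⟨hc, hcf⟩ (vorCell_anti inter_subset_left c hvor)
  · exact hinn c ⟨hc, hcf⟩ ⟨e + x, ⟨add_comm x e ▸ add_mem_add hx he, hvor⟩, rfl⟩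

end GInvariance

theorem stmt7_general {d : ℕ} (𝕊 : Set (Set (EuclideanSpace ℝ (Fin d))))
    (h𝕊 : ∀ S ∈ 𝕊, S.Nonempty ∧ IsCompact S)
    (Q : Set (EuclideanSpace ℝ (Fin d)))
    (ha : ∀ S ∈ 𝕊, gOp (S ∩ frontier (convexHull ℝ S)) Q ⊆ Q)
    (hb : ∀ S ∈ 𝕊, ∀ c ∈ S \ frontier (convexHull ℝ S),
      (fun v => v - c) '' ((convexHull ℝ S + Q) ∩ vorCell S c) ⊆ Q) :
    GInvariantColl 𝕊 Q ∧
    ((0 : EuclideanSpace ℝ (Fin d)) ∈ Q → (⋃ n : ℕ, gIter 𝕊 {0} n) ⊆ Q) ∧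
    ((0 : EuclideanSpace ℝ (Fin d)) ∈ Q → Bornology.IsBounded Q →
      Bornology.IsBounded (⋃ n : ℕ, gIter 𝕊 {0} n)) := by
  have hQ : GInvariantColl 𝕊 Q := fun S hS =>
    gInvariant_of_corner_of_inner (h𝕊 S hS).2 (gInvariant_iff_gOp_subset.2 (ha S hS)) (hb S hS)
  have hiter (h0 : (0 : EuclideanSpace ℝ (Fin d)) ∈ Q) : ⋃ n, gIter 𝕊 {0} n ⊆ Q :=
    hQ.iUnion_gIter_subset (singleton_subset_iff.2 h0)
  exact ⟨hQ, hiter, fun h0 hQb => hQb.subset (hiter h0)⟩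

theorem stmt7 {d : ℕ} (𝕊 : Set (Set (EuclideanSpace ℝ (Fin d))))
    (h𝕊 : ∀ S ∈ 𝕊, S.Nonempty ∧ IsCompact S)
    (hcor : ∀ S ∈ 𝕊, (S ∩ frontier (convexHull ℝ S)).Nonempty)
    (Q : Set (EuclideanSpace ℝ (Fin d)))
    (ha : ∀ S ∈ 𝕊, gOp (S ∩ frontier (convexHull ℝ S)) Q ⊆ Q)
    (hb : ∀ S ∈ 𝕊, ∀ c ∈ S \ frontier (convexHull ℝ S),
      (fun v => v - c) '' ((convexHull ℝ S + Q) ∩ vorCell S c) ⊆ Q) :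
    GInvariantColl 𝕊 Q ∧
    ((0 : EuclideanSpace ℝ (Fin d)) ∈ Q → (⋃ n : ℕ, gIter 𝕊 {0} n) ⊆ Q) ∧
    ((0 : EuclideanSpace ℝ (Fin d)) ∈ Q → Bornology.IsBounded Q →
      Bornology.IsBounded (⋃ n : ℕ, gIter 𝕊 {0} n)) :=
  stmt7_general 𝕊 h𝕊 Q ha hb
end
end

section
/- Let 𝕊 be a collection of nonempty compact subsets of E = EuclideanSpace ℝ (Fin d). Then the minimal G-invariant set with respect to 𝕊 containing the origin, namely 𝔤^∞_𝕊({0}) := ⋃_{n ≥ 0} 𝔤ⁿ_𝕊({0}), is star-convex with respect to the origin. -/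
open Set Pointwise

noncomputable section

/-!
Voronoi cells are star-convex about their centres. Scaling
an element `y - c` of `𝔤_S(A)` by `t ∈ [0, 1]` amounts to moving `y` towards `c` inside its cell,
so `𝔤_S` preserves star-convexity about `0`, and hence so do all iterates starting from `{0}`.
-/

/- Both sides squared differ by `2 t ⟪u, v⟫ + ‖v‖²`, which is affine in `t`, nonnegative at `t = 1`
by hypothesis and at `t = 0` trivially. -/
lemma norm_smul_le_norm_smul_add {F : Type*} [NormedAddCommGroup F] [InnerProductSpace ℝ F]
    {u v : F} (h : ‖u‖ ≤ ‖u + v‖) {t : ℝ} (ht₀ : 0 ≤ t) (ht₁ : t ≤ 1) :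
    ‖t • u‖ ≤ ‖t • u + v‖ := by
  have h_sq : ‖u‖ ^ 2 ≤ ‖u + v‖ ^ 2 := pow_le_pow_left₀ (norm_nonneg _) h 2
  rw [norm_add_sq_real] at h_sq
  refine (pow_le_pow_iff_left₀ (norm_nonneg _) (norm_nonneg _) two_ne_zero).1 ?_
  rw [norm_add_sq_real, real_inner_smul_left]
  nlinarith [sq_nonneg ‖v‖]

lemma starConvex_vorCell {d : ℕ} (S : Set (EuclideanSpace ℝ (Fin d)))
    (c : EuclideanSpace ℝ (Fin d)) : StarConvex ℝ c (vorCell S c) := by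
  intro y hy a b ha hb hab c' hc'
  obtain rfl : a = 1 - b := by linarith
  have h := hy c' hc'
  rw [show y - c' = (y - c) + (c - c') by abel] at h
  rw [show (1 - b) • c + b • y - c = b • (y - c) by module,
    show (1 - b) • c + b • y - c' = b • (y - c) + (c - c') by module]
  exact norm_smul_le_norm_smul_add h hb (by linarith)

lemma starConvex_gOp {d : ℕ} {A : Set (EuclideanSpace ℝ (Fin d))} (hA : StarConvex ℝ 0 A)
    (S : Set (EuclideanSpace ℝ (Fin d))) : StarConvex ℝ 0 (gOp S A) := by
  refine starConvex_zero_iff.2 fun e he t ht₀ ht₁ ↦ ?_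
  simp only [gOp, mem_iUnion, mem_image, mem_inter_iff] at he ⊢
  obtain ⟨c, hc, _, ⟨⟨x, hx, a, ha, rfl⟩, hvor⟩, rfl⟩ := he
  refine ⟨c, hc, c + t • (x + a - c), ⟨⟨(1 - t) • c + t • x, ?_, t • a, ?_, by module⟩,
    (starConvex_vorCell S c).add_smul_sub_mem hvor ht₀ ht₁⟩, by module⟩
  · exact convex_convexHull ℝ S (subset_convexHull ℝ S hc) hx (by linarith) ht₀ (by ring)
  · exact hA.smul_mem ha ht₀ ht₁

lemma starConvex_gIter {d : ℕ} {A : Set (EuclideanSpace ℝ (Fin d))} (hA : StarConvex ℝ 0 A)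
    (𝕊 : Set (Set (EuclideanSpace ℝ (Fin d)))) (n : ℕ) : StarConvex ℝ 0 (gIter 𝕊 A n) := by
  induction n with
  | zero => exact hA
  | succ n ih => exact starConvex_iUnion₂ fun S _ ↦ starConvex_gOp ih S

theorem stmt9_general {d : ℕ} (𝕊 : Set (Set (EuclideanSpace ℝ (Fin d)))) :
    StarConvex ℝ 0 (⋃ n : ℕ, gIter 𝕊 {0} n) :=
  starConvex_iUnion fun n ↦ starConvex_gIter (starConvex_singleton 0) 𝕊 n

theorem stmt9 {d : ℕ} (𝕊 : Set (Set (EuclideanSpace ℝ (Fin d))))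
    (h𝕊 : ∀ S ∈ 𝕊, S.Nonempty ∧ IsCompact S) :
    StarConvex ℝ 0 (⋃ n : ℕ, gIter 𝕊 {0} n) :=
  stmt9_general 𝕊
end
end

section
/- Let S be a nonempty compact subset of E = EuclideanSpace ℝ (Fin d), and let Q := 𝔤^∞_S({0}) be the minimal G-invariant set with respect to S containing the origin. Then for every y ∈ S that does not lie on the frontier of the convex hull of S (a ‘non-corner’ point of S), the translated Voronoi cell V_S(y) − y is contained in Q. -/
open Set Pointwise

noncomputable section

/-! Since `y` is an interior point of `conv S`, the point `y + u` lies in `conv S` for a short step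
`u = (x - y)/n`. The segment from `y` to `x ∈ V_S(y)` stays in the convex cell `V_S(y)`, so applying
`𝔤_S` with the hull point `y + u` and the center `y` advances `k • u ∈ 𝔤ᵏ_S {0}` to
`(k + 1) • u ∈ 𝔤ᵏ⁺¹_S {0}`; after `n` steps this reaches `x - y`. -/

theorem convex_setOf_norm_sub_le_norm_sub {E : Type*} [NormedAddCommGroup E]
    [InnerProductSpace ℝ E] (a b : E) : Convex ℝ {x : E | ‖x - a‖ ≤ ‖x - b‖} := by
  have half_space : {x : E | ‖x - a‖ ≤ ‖x - b‖} =
      {x | inner ℝ x (b - a) * 2 ≤ ‖b‖ ^ 2 - ‖a‖ ^ 2} := by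
    ext x
    simp only [mem_ofPred_eq]
    rw [← pow_le_pow_iff_left₀ (norm_nonneg _) (norm_nonneg _) two_ne_zero,
      norm_sub_sq_real, norm_sub_sq_real, inner_sub_right]
    constructor <;> intro h <;> linarith
  rw [half_space]
  exact convex_halfSpace_le
    ⟨fun x y => by rw [inner_add_left, add_mul],
     fun r x => by rw [real_inner_smul_left, smul_eq_mul, mul_assoc]⟩ _

section Voronoi

variable {d : ℕ} {S A : Set (EuclideanSpace ℝ (Fin d))} {c p e : EuclideanSpace ℝ (Fin d)}

theorem convex_vorCell (S : Set (EuclideanSpace ℝ (Fin d))) (c : EuclideanSpace ℝ (Fin d)) :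
    Convex ℝ (vorCell S c) := by
  have : vorCell S c = ⋂ c' ∈ S, {x | ‖x - c‖ ≤ ‖x - c'‖} := by
    ext x
    simp [vorCell]
  rw [this]
  exact convex_iInter₂ fun c' _ => convex_setOf_norm_sub_le_norm_sub c c'

theorem mem_vorCell_self (S : Set (EuclideanSpace ℝ (Fin d))) (c : EuclideanSpace ℝ (Fin d)) :
    c ∈ vorCell S c :=
  fun _ _ => by simp

theorem add_sub_mem_gOp (hc : c ∈ S) (hp : p ∈ convexHull ℝ S) (he : e ∈ A)
    (hvor : p + e ∈ vorCell S c) : p + e - c ∈ gOp S A :=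
  mem_iUnion₂.2 ⟨c, hc, p + e, ⟨add_mem_add hp he, hvor⟩, rfl⟩

theorem smul_mem_gIterS_zero {y u : EuclideanSpace ℝ (Fin d)} {n : ℕ} (hy : y ∈ S)
    (hu : y + u ∈ convexHull ℝ S) (hn : y + (n : ℝ) • u ∈ vorCell S y) :
    ∀ k ≤ n, (k : ℝ) • u ∈ gIterS S {0} k := by
  intro k hk
  induction k with
  | zero => simp [gIterS]
  | succ k ih =>
    have hn0 : (0 : ℝ) < n := by exact_mod_cast (Nat.zero_lt_succ k).trans_le hk
    have hseg : y + ((k + 1 : ℝ) / n) • ((n : ℝ) • u) ∈ vorCell S y :=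
      (convex_vorCell S y).add_smul_mem (mem_vorCell_self S y) hn
        ⟨by positivity, (div_le_one hn0).2 (by exact_mod_cast hk)⟩
    rw [smul_smul, div_mul_cancel₀ _ hn0.ne'] at hseg
    have hstep := add_sub_mem_gOp hy hu (ih (Nat.le_of_succ_le hk))
      (by convert hseg using 1; module)
    have : y + u + (k : ℝ) • u - y = ((k + 1 : ℕ) : ℝ) • u := by push_cast; module
    rwa [this] at hstep

end Voronoi

theorem exists_add_inv_smul_mem {E : Type*} [AddCommGroup E] [Module ℝ E] [TopologicalSpace E]
    [ContinuousAdd E] [ContinuousSMul ℝ E] {s : Set E} {y : E} (hs : s ∈ nhds y) (v : E) :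
    ∃ n : ℕ, n ≠ 0 ∧ y + (n : ℝ)⁻¹ • v ∈ s := by
  have : Filter.Tendsto (fun n : ℕ => y + (n : ℝ)⁻¹ • v) Filter.atTop (nhds y) := by
    simpa using tendsto_const_nhds.add ((tendsto_inv_atTop_nhds_zero_nat (𝕜 := ℝ)).smul_const v)
  exact ((Filter.eventually_ne_atTop 0).and (this.eventually hs)).exists

theorem stmt10_general {d : ℕ} (S : Set (EuclideanSpace ℝ (Fin d))) :
    ∀ y ∈ S, y ∉ frontier (convexHull ℝ S) →
      (fun v => v - y) '' vorCell S y ⊆ ⋃ n : ℕ, gIterS S {0} n := by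
  rintro y hy hyf _ ⟨x, hx, rfl⟩
  have hint : y ∈ interior (convexHull ℝ S) :=
    (mem_interior_iff_notMem_frontier (subset_convexHull ℝ S hy)).2 hyf
  obtain ⟨n, hn, hu⟩ := exists_add_inv_smul_mem (mem_interior_iff_mem_nhds.1 hint) (x - y)
  have hsteps : (n : ℝ) • ((n : ℝ)⁻¹ • (x - y)) = x - y := by
    rw [smul_inv_smul₀ (Nat.cast_ne_zero.2 hn)]
  have hfinal := smul_mem_gIterS_zero hy hu (by rwa [hsteps, add_sub_cancel]) n le_rfl
  rw [hsteps] at hfinal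
  exact mem_iUnion.2 ⟨n, hfinal⟩

theorem stmt10 {d : ℕ} (S : Set (EuclideanSpace ℝ (Fin d)))
    (hS : S.Nonempty) (hSc : IsCompact S) :
    ∀ y ∈ S, y ∉ frontier (convexHull ℝ S) →
      (fun v => v - y) '' vorCell S y ⊆ ⋃ n : ℕ, gIterS S {0} n :=
  stmt10_general S
end
end

section
/- Work in E = EuclideanSpace ℝ (Fin 2) with coordinates (v 0, v 1). Fix φ ∈ (0, π/2) and h_max ≥ 0, and for h ∈ [0, h_max] let T(h) := {v ∈ E : 0 ≤ v 1 ∧ v 1 ≤ h ∧ |v 0| ≤ (v 1) · tan φ}, and let 𝕊 := {T(h) : h ∈ [0, h_max]}. Then T(h_max) is F-invariant with respect to 𝕊, and it is the minimal F-invariant set with respect to 𝕊 containing the origin: every set D' that is F-invariant with respect to 𝕊 and contains 0 satisfies T(h_max) ⊆ D'. -/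
open Set Pointwise

noncomputable section

/-!
Let `z ∈ T hmax`, let `c` be its nearest point in `T h` and `x ∈ T h`. If `z₁ ≤ h` then
`c = z` and `z + x - c = x`. Otherwise `c` lies on the top edge of `T h`, and comparing with the
clamp of `z` to that edge gives `|z₀ - c₀| ≤ (z₁ - h) tan φ`: the step `z - c` lies in the cone,
so `z + x - c` stays in `T hmax`. For minimality, invariance under `T (v₁)` at `z = c = 0` puts
every `v ∈ T (v₁)` into `D'`.
-/

section Voronoi

variable {d : ℕ} {S D : Set (EuclideanSpace ℝ (Fin d))} {z c : EuclideanSpace ℝ (Fin d)}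

lemma eq_of_mem_vorCell_of_mem (hzS : z ∈ S) (hzc : z ∈ vorCell S c) : c = z := by
  have := hzc z hzS
  rw [sub_self, norm_zero, norm_le_zero_iff, sub_eq_zero] at this
  exact this.symm

lemma zero_mem_vorCell_zero : (0 : EuclideanSpace ℝ (Fin d)) ∈ vorCell S 0 := by
  intro c' _
  simp

lemma convexHull_subset_of_fInvariant (hS : 0 ∈ S) (hD : FInvariant S D) (hD0 : 0 ∈ D) :
    convexHull ℝ S ⊆ D := by
  intro x hx
  simpa using hD 0 hD0 0 hS zero_mem_vorCell_zero x hx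

end Voronoi

lemma norm_sub_sq_fin_two (u v : EuclideanSpace ℝ (Fin 2)) :
    ‖u - v‖ ^ 2 = (u 0 - v 0) ^ 2 + (u 1 - v 1) ^ 2 := by
  simp [EuclideanSpace.real_norm_sq_eq, Fin.sum_univ_two]

def triangle (t h : ℝ) : Set (EuclideanSpace ℝ (Fin 2)) :=
  {v | 0 ≤ v 1 ∧ v 1 ≤ h ∧ |v 0| ≤ v 1 * t}

namespace triangle

variable {t h h' : ℝ}

@[simp]
lemma mem_iff {v : EuclideanSpace ℝ (Fin 2)} :
    v ∈ triangle t h ↔ 0 ≤ v 1 ∧ v 1 ≤ h ∧ |v 0| ≤ v 1 * t :=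
  Iff.rfl

lemma mono (hh : h ≤ h') : triangle t h ⊆ triangle t h' :=
  fun _ ⟨h0, h1, h2⟩ => ⟨h0, h1.trans hh, h2⟩

lemma convex (t h : ℝ) : Convex ℝ (triangle t h) := by
  intro u ⟨hu0, hu1, hu2⟩ w ⟨hw0, hw1, hw2⟩ a b ha hb hab
  simp only [abs_le, mem_iff, PiLp.add_apply, PiLp.smul_apply, smul_eq_mul] at hu2 hw2 ⊢
  refine ⟨by positivity, by nlinarith, by nlinarith, by nlinarith⟩

lemma top_mem (hh : 0 ≤ h) {a : ℝ} (ha : |a| ≤ h * t) :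
    !₂[a, h] ∈ triangle t h := by
  simpa using ⟨hh, ha⟩

variable {z c : EuclideanSpace ℝ (Fin 2)}

lemma sq_le_of_mem_vorCell (hzc : z ∈ vorCell (triangle t h) c) {w} (hw : w ∈ triangle t h) :
    (z 0 - c 0) ^ 2 + (z 1 - c 1) ^ 2 ≤ (z 0 - w 0) ^ 2 + (z 1 - w 1) ^ 2 := by
  rw [← norm_sub_sq_fin_two, ← norm_sub_sq_fin_two]
  exact pow_le_pow_left₀ (norm_nonneg _) (hzc w hw) 2

lemma height_eq_of_mem_vorCell (ht : 0 ≤ t) (hc : c ∈ triangle t h) (hzh : h < z 1)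
    (hzc : z ∈ vorCell (triangle t h) c) : c 1 = h := by
  obtain ⟨hc0, hc1, hc2⟩ := hc
  have hw := top_mem (hc0.trans hc1) (hc2.trans (mul_le_mul_of_nonneg_right hc1 ht))
  have := sq_le_of_mem_vorCell hzc hw
  simp only [Matrix.cons_val_zero, Matrix.cons_val_one] at this
  nlinarith

lemma abs_sub_le_of_mem_vorCell (ht : 0 ≤ t) (hz : |z 0| ≤ z 1 * t) (hc : c ∈ triangle t h)
    (hzh : h < z 1) (hzc : z ∈ vorCell (triangle t h) c) : |z 0 - c 0| ≤ (z 1 - h) * t := by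
  have hc1 := height_eq_of_mem_vorCell ht hc hzh hzc
  have hh : 0 ≤ h := hc1 ▸ hc.1
  have hht : 0 ≤ h * t := mul_nonneg hh ht
  have hzt : 0 ≤ (z 1 - h) * t := mul_nonneg (by linarith) ht
  -- compare with the point of the top edge closest to `z`
  set a := max (-(h * t)) (min (z 0) (h * t))
  have ha : |a| ≤ h * t := abs_le.2 ⟨le_max_left _ _, max_le (by linarith) (min_le_right _ _)⟩
  have := sq_le_of_mem_vorCell hzc (top_mem hh ha)
  simp only [Matrix.cons_val_zero, Matrix.cons_val_one, hc1] at this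
  refine (sq_le_sq.1 (by linarith : (z 0 - c 0) ^ 2 ≤ (z 0 - a) ^ 2)).trans ?_
  rw [abs_le] at hz ⊢
  constructor <;> rcases max_cases (-(h * t)) (min (z 0) (h * t)) with ⟨hm, _⟩ | ⟨hm, _⟩ <;>
    rcases min_cases (z 0) (h * t) with ⟨hn, _⟩ | ⟨hn, _⟩ <;> simp only [a, hm, hn] <;>
    linarith

lemma fInvariant (ht : 0 ≤ t) (hh : h ≤ h') : FInvariant (triangle t h) (triangle t h') := by
  intro z hz c hc hzc x hx
  rw [(convex t h).convexHull_eq] at hx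
  rcases le_or_gt (z 1) h with hzh | hzh
  · obtain rfl := eq_of_mem_vorCell_of_mem (show z ∈ triangle t h from ⟨hz.1, hzh, hz.2.2⟩) hzc
    simpa using mono hh hx
  · have hc1 := height_eq_of_mem_vorCell ht hc hzh hzc
    have hzc0 := abs_sub_le_of_mem_vorCell ht hz.2.2 hc hzh hzc
    obtain ⟨hx0, hx1, hx2⟩ := hx
    simp only [mem_iff, PiLp.sub_apply, PiLp.add_apply, hc1]
    refine ⟨by linarith, by linarith [hz.2.1], ?_⟩
    calc |z 0 + x 0 - c 0| ≤ |z 0 - c 0| + |x 0| := by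
          rw [add_sub_right_comm]; exact abs_add_le _ _
      _ ≤ (z 1 + x 1 - h) * t := by linarith

end triangle

theorem stmt17_general (φ : ℝ) (hφ : φ ∈ Set.Ioo 0 (Real.pi / 2))
    (hmax : ℝ)
    (T : ℝ → Set (EuclideanSpace ℝ (Fin 2)))
    (hT : ∀ h : ℝ, T h = {v : EuclideanSpace ℝ (Fin 2) |
      0 ≤ v 1 ∧ v 1 ≤ h ∧ |v 0| ≤ v 1 * Real.tan φ})
    (𝕊 : Set (Set (EuclideanSpace ℝ (Fin 2))))
    (h𝕊 : 𝕊 = (fun h => T h) '' Set.Icc 0 hmax) :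
    FInvariantColl 𝕊 (T hmax) ∧
    (∀ D' : Set (EuclideanSpace ℝ (Fin 2)), FInvariantColl 𝕊 D' →
      (0 : EuclideanSpace ℝ (Fin 2)) ∈ D' → T hmax ⊆ D') := by
  obtain rfl : T = triangle (Real.tan φ) := funext hT
  have ht := (Real.tan_pos_of_pos_of_lt_pi_div_two hφ.1 hφ.2).le
  subst h𝕊
  refine ⟨?_, fun D hD hD0 v hv => ?_⟩
  · rintro _ ⟨h, ⟨-, hle⟩, rfl⟩
    exact triangle.fInvariant ht hle
  · have hS := hD _ ⟨v 1, ⟨hv.1, hv.2.1⟩, rfl⟩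
    have h0 : (0 : EuclideanSpace ℝ (Fin 2)) ∈ triangle (Real.tan φ) (v 1) := by
      simpa using hv.1
    exact convexHull_subset_of_fInvariant h0 hS hD0
      (subset_convexHull ℝ _ ⟨hv.1, le_rfl, hv.2.2⟩)

theorem stmt17 (φ : ℝ) (hφ : φ ∈ Set.Ioo 0 (Real.pi / 2))
    (hmax : ℝ) (hh : 0 ≤ hmax)
    (T : ℝ → Set (EuclideanSpace ℝ (Fin 2)))
    (hT : ∀ h : ℝ, T h = {v : EuclideanSpace ℝ (Fin 2) |
      0 ≤ v 1 ∧ v 1 ≤ h ∧ |v 0| ≤ v 1 * Real.tan φ})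
    (𝕊 : Set (Set (EuclideanSpace ℝ (Fin 2))))
    (h𝕊 : 𝕊 = (fun h => T h) '' Set.Icc 0 hmax) :
    FInvariantColl 𝕊 (T hmax) ∧
    (∀ D' : Set (EuclideanSpace ℝ (Fin 2)), FInvariantColl 𝕊 D' →
      (0 : EuclideanSpace ℝ (Fin 2)) ∈ D' → T hmax ⊆ D') :=
  stmt17_general φ hφ hmax T hT 𝕊 h𝕊
end
end
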